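/- arXiv:1906.02929 — 9 statements merged into one kernel-verified Lean document; each statement's English description precedes it below -/
import Mathlib

section
/- For any joint PMF P on X × Y and ρ ∈ [0,1], 1 ≤ ∑_{y∈Y} (∑_{x∈X} P(x,y)^{1/(1+ρ)})^{1+ρ} ≤ |X|^ρ. -/
open Finset

lemma real_rpow_add_le_add_rpow {p : ℝ} (a b : ℝ) (ha : 0 ≤ a) (hb : 0 ≤ b)
    (hp : 0 ≤ p) (hp1 : p ≤ 1) : (a + b) ^ p ≤ a ^ p + b ^ p := by
  lift a to NNReal using ha
  lift b to NNReal using hb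
  have := NNReal.rpow_add_le_add_rpow a b hp hp1
  exact_mod_cast this

lemma real_sum_rpow_le {ι : Type*} (s : Finset ι) (f : ι → ℝ) (hf : ∀ i ∈ s, 0 ≤ f i)
    {p : ℝ} (hp0 : 0 < p) (hp1 : p ≤ 1) :
    (∑ i ∈ s, f i) ^ p ≤ ∑ i ∈ s, f i ^ p := by
  induction s using Finset.cons_induction with
  | empty => simp [Real.zero_rpow hp0.ne']
  | cons a s ha ih =>
    rw [Finset.sum_cons, Finset.sum_cons]
    have hfs : ∀ i ∈ s, 0 ≤ f i := fun i hi => hf i (Finset.mem_cons_of_mem hi)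
    have hsum : 0 ≤ ∑ i ∈ s, f i := Finset.sum_nonneg hfs
    calc (f a + ∑ i ∈ s, f i) ^ p ≤ f a ^ p + (∑ i ∈ s, f i) ^ p :=
          real_rpow_add_le_add_rpow _ _ (hf a (Finset.mem_cons_self a s)) hsum hp0.le hp1
      _ ≤ f a ^ p + ∑ i ∈ s, f i ^ p := by gcongr; exact ih hfs

/-- For a joint PMF `P` on `X × Y` and `ρ ∈ [0,1]`:
`1 ≤ ∑ y, (∑ x, P(x,y)^(1/(1+ρ)))^(1+ρ) ≤ |X|^ρ`. -/
theorem gallager_double_sum_bounds {X Y : Type*} [Fintype X] [Fintype Y]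
    [Nonempty X] [Nonempty Y] (P : X × Y → ℝ)
    (hP0 : ∀ p, 0 ≤ P p) (hP1 : ∑ p, P p = 1)
    (ρ : ℝ) (hρ0 : 0 ≤ ρ) (hρ1 : ρ ≤ 1) :
    1 ≤ ∑ y, (∑ x, P (x, y) ^ (1 / (1 + ρ))) ^ (1 + ρ) ∧
      ∑ y, (∑ x, P (x, y) ^ (1 / (1 + ρ))) ^ (1 + ρ) ≤ (Fintype.card X : ℝ) ^ ρ := by
  have h1ρ : (0:ℝ) < 1 + ρ := by linarith
  set t : ℝ := 1 / (1 + ρ) with ht_def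
  have ht0 : 0 < t := by positivity
  have ht1 : t ≤ 1 := by
    rw [ht_def, div_le_one h1ρ]; linarith
  have htmul : t * (1 + ρ) = 1 := by
    rw [ht_def]; field_simp
  have hq0 : ∀ y : Y, (0:ℝ) ≤ ∑ x, P (x, y) :=
    fun y => Finset.sum_nonneg fun x _ => hP0 _
  have hqsum : ∑ y : Y, ∑ x : X, P (x, y) = 1 := by
    rw [← hP1, Fintype.sum_prod_type_right]
  have hS0 : ∀ y : Y, (0:ℝ) ≤ ∑ x, P (x, y) ^ t :=
    fun y => Finset.sum_nonneg fun x _ => Real.rpow_nonneg (hP0 _) t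
  constructor
  · -- lower bound
    calc (1:ℝ) = ∑ y : Y, ∑ x : X, P (x, y) := hqsum.symm
      _ ≤ ∑ y, (∑ x, P (x, y) ^ t) ^ (1 + ρ) := by
          apply Finset.sum_le_sum
          intro y _
          have h1 : (∑ x, P (x, y)) ^ t ≤ ∑ x, P (x, y) ^ t :=
            real_sum_rpow_le _ _ (fun x _ => hP0 _) ht0 ht1
          have h2 : ((∑ x, P (x, y)) ^ t) ^ (1 + ρ) ≤ (∑ x, P (x, y) ^ t) ^ (1 + ρ) :=
            Real.rpow_le_rpow (Real.rpow_nonneg (hq0 y) t) h1 h1ρ.le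
          calc ∑ x, P (x, y) = ((∑ x, P (x, y)) ^ t) ^ (1 + ρ) := by
                rw [← Real.rpow_mul (hq0 y), htmul, Real.rpow_one]
            _ ≤ (∑ x, P (x, y) ^ t) ^ (1 + ρ) := h2
  · -- upper bound
    have key : ∀ y : Y, (∑ x, P (x, y) ^ t) ^ (1 + ρ) ≤
        (Fintype.card X : ℝ) ^ ρ * ∑ x, P (x, y) := by
      intro y
      have := Real.rpow_sum_le_const_mul_sum_rpow_of_nonneg Finset.univ
        (f := fun x => P (x, y) ^ t) (p := 1 + ρ) (by linarith)
        (fun x _ => Real.rpow_nonneg (hP0 _) t)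
      simp only [Finset.card_univ] at this
      calc (∑ x, P (x, y) ^ t) ^ (1 + ρ)
          ≤ (Fintype.card X : ℝ) ^ (1 + ρ - 1) * ∑ x, (P (x, y) ^ t) ^ (1 + ρ) := this
        _ = (Fintype.card X : ℝ) ^ ρ * ∑ x, P (x, y) := by
            congr 1
            · norm_num
            · apply Finset.sum_congr rfl
              intro x _
              rw [← Real.rpow_mul (hP0 _), htmul, Real.rpow_one]
    calc ∑ y, (∑ x, P (x, y) ^ t) ^ (1 + ρ)
        ≤ ∑ y, (Fintype.card X : ℝ) ^ ρ * ∑ x, P (x, y) :=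
          Finset.sum_le_sum fun y _ => key y
      _ = (Fintype.card X : ℝ) ^ ρ := by
          rw [← Finset.mul_sum, hqsum, mul_one]
end

section
/- For a PMF P on a finite set X and ρ ∈ [0,1], the total variation distance between P and the tilted distribution P^{(ρ)}(x) = P(x)^{1/(1+ρ)} / ∑_{x'} P(x')^{1/(1+ρ)} satisfies ∑_{x∈X} |P(x) − P^{(ρ)}(x)| ≤ 2(1 − |X|^{-ρ}). -/
open Finset

/-- Total variation bound between a PMF `P` and its tilted distribution:
`∑ x, |P x − P^{(ρ)} x| ≤ 2 (1 − |X|^{-ρ})`. -/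
theorem tv_tilted_le {X : Type*} [Fintype X] [Nonempty X] (P : X → ℝ)
    (hP0 : ∀ x, 0 ≤ P x) (hP1 : ∑ x, P x = 1)
    (ρ : ℝ) (hρ0 : 0 ≤ ρ) (hρ1 : ρ ≤ 1) :
    ∑ x, |P x - P x ^ (1 / (1 + ρ)) / ∑ x', P x' ^ (1 / (1 + ρ))| ≤
      2 * (1 - (Fintype.card X : ℝ) ^ (-ρ)) := by
  have h1ρ : (0:ℝ) < 1 + ρ := by linarith
  set α : ℝ := 1 / (1 + ρ) with hα
  have hα0 : 0 < α := by positivity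
  have hα1 : α ≤ 1 := by
    rw [hα, div_le_one h1ρ]; linarith
  have hαmul : α * (1 + ρ) = 1 := by
    rw [hα]; field_simp
  have hPle1 : ∀ x, P x ≤ 1 := by
    intro x
    rw [← hP1]
    exact single_le_sum (fun i _ => hP0 i) (mem_univ x)
  have hle : ∀ x, P x ≤ P x ^ α := by
    intro x
    rcases eq_or_lt_of_le (hP0 x) with h | h
    · rw [← h, Real.zero_rpow hα0.ne']
    · calc P x = P x ^ (1:ℝ) := (Real.rpow_one _).symm
        _ ≤ P x ^ α := Real.rpow_le_rpow_of_exponent_ge h (hPle1 x) hα1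
  set S : ℝ := ∑ x', P x' ^ α with hS
  have hS1 : 1 ≤ S := by
    rw [← hP1]; exact sum_le_sum fun i _ => hle i
  have hSpos : 0 < S := lt_of_lt_of_le one_pos hS1
  have hn1 : (1:ℝ) ≤ (Fintype.card X : ℝ) := by
    exact_mod_cast Fintype.card_pos
  -- S ≤ n ^ ρ
  have hSn : S ≤ (Fintype.card X : ℝ) ^ ρ := by
    have h0 : (∑ x : X, P x ^ α) ^ (1 + ρ) ≤ ((#(univ : Finset X) : ℝ)) ^ ((1+ρ) - 1) *
        ∑ x, (P x ^ α) ^ (1 + ρ) :=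
      Real.rpow_sum_le_const_mul_sum_rpow_of_nonneg univ (by linarith)
        (fun i _ => Real.rpow_nonneg (hP0 i) _)
    have h1 : ∑ x, (P x ^ α) ^ (1 + ρ) = ∑ x, P x :=
      sum_congr rfl fun x _ => by
        rw [← Real.rpow_mul (hP0 x), hαmul, Real.rpow_one]
    rw [h1, hP1, mul_one, card_univ, add_sub_cancel_left] at h0
    calc S = S ^ (1:ℝ) := (Real.rpow_one _).symm
      _ ≤ S ^ (1 + ρ) := Real.rpow_le_rpow_of_exponent_le hS1 (by linarith)
      _ ≤ _ := h0
  have hinv : (Fintype.card X : ℝ) ^ (-ρ) ≤ 1 / S := by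
    rw [Real.rpow_neg (by linarith), ← one_div]
    exact one_div_le_one_div_of_le hSpos hSn
  have hQsum : ∑ x, P x ^ α / S = 1 := by
    rw [← sum_div, ← hS, div_self hSpos.ne']
  have habs : ∀ a : ℝ, |a| = 2 * max a 0 - a := by
    intro a
    rcases le_total 0 a with h | h
    · rw [abs_of_nonneg h, max_eq_left h]; ring
    · rw [abs_of_nonpos h, max_eq_right h]; ring
  have hmax : ∀ x, max (P x - P x ^ α / S) 0 ≤ P x * (1 - 1/S) := by
    intro x
    have h1S : 1 / S ≤ 1 := by rw [div_le_one hSpos]; exact hS1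
    refine max_le ?_ (mul_nonneg (hP0 x) (by linarith))
    have h2 : P x / S ≤ P x ^ α / S := by gcongr; exact hle x
    have h3 : P x * (1 - 1/S) = P x - P x / S := by ring
    linarith
  calc ∑ x, |P x - P x ^ α / S|
      = ∑ x, (2 * max (P x - P x ^ α / S) 0 - (P x - P x ^ α / S)) := by
        exact sum_congr rfl fun x _ => habs _
    _ = 2 * ∑ x, max (P x - P x ^ α / S) 0 - (∑ x, P x - ∑ x, P x ^ α / S) := by
        rw [sum_sub_distrib, ← mul_sum, sum_sub_distrib]
    _ = 2 * ∑ x, max (P x - P x ^ α / S) 0 := by rw [hP1, hQsum]; ring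
    _ ≤ 2 * ∑ x, P x * (1 - 1/S) := by
        have := sum_le_sum fun x (_ : x ∈ univ) => hmax x
        linarith
    _ = 2 * (1 - 1/S) := by rw [← sum_mul, hP1, one_mul]
    _ ≤ 2 * (1 - (Fintype.card X : ℝ) ^ (-ρ)) := by linarith
end

section
/- For any PMF P on a finite set X with all values positive and any ρ ∈ [0,1], it holds that ρ·H(P^{(ρ)}) − log(∑_{x∈X} P(x)^{1/(1+ρ)})^{1+ρ} = D(P^{(ρ)} ‖ P), where P^{(ρ)}(x) = P(x)^{1/(1+ρ)} / ∑_{x'} P(x')^{1/(1+ρ)}, H denotes Shannon entropy, and D denotes Kullback–Leibler divergence. -/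
open Finset

/-- Gallager's identity: `ρ·H(P^{(ρ)}) − log (∑ x, P x^{1/(1+ρ)})^{1+ρ} = D(P^{(ρ)} ‖ P)`. -/
theorem gallager_identity_single {X : Type*} [Fintype X] [Nonempty X] (P : X → ℝ)
    (hPpos : ∀ x, 0 < P x) (hP1 : ∑ x, P x = 1)
    (ρ : ℝ) (hρ0 : 0 ≤ ρ) (hρ1 : ρ ≤ 1)
    (Q : X → ℝ) (hQ : ∀ x, Q x = P x ^ (1 / (1 + ρ)) / ∑ x', P x' ^ (1 / (1 + ρ))) :
    ρ * (-∑ x, Q x * Real.log (Q x)) -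
        Real.log ((∑ x, P x ^ (1 / (1 + ρ))) ^ (1 + ρ)) =
      ∑ x, Q x * Real.log (Q x / P x) := by
  have hρ : (0:ℝ) < 1 + ρ := by linarith
  set S := ∑ x', P x' ^ (1 / (1 + ρ)) with hS
  have hpow : ∀ x : X, 0 < P x ^ (1 / (1 + ρ)) := fun x => Real.rpow_pos_of_pos (hPpos x) _
  have hSpos : 0 < S := Finset.sum_pos (fun x _ => hpow x) Finset.univ_nonempty
  have hQpos : ∀ x, 0 < Q x := fun x => by rw [hQ]; exact div_pos (hpow x) hSpos
  have hQsum : ∑ x, Q x = 1 := by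
    simp only [hQ]
    rw [← Finset.sum_div, ← hS, div_self (ne_of_gt hSpos)]
  have hlogQ : ∀ x, Real.log (Q x) = (1 / (1 + ρ)) * Real.log (P x) - Real.log S := by
    intro x
    rw [hQ, Real.log_div (ne_of_gt (hpow x)) (ne_of_gt hSpos), Real.log_rpow (hPpos x)]
  have hlogQP : ∀ x, Real.log (Q x / P x)
      = (1 / (1 + ρ)) * Real.log (P x) - Real.log S - Real.log (P x) := by
    intro x
    rw [Real.log_div (ne_of_gt (hQpos x)) (ne_of_gt (hPpos x)), hlogQ x]
  have h1 : ∑ x, Q x * Real.log (Q x)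
      = (1 / (1 + ρ)) * (∑ x, Q x * Real.log (P x)) - Real.log S := by
    simp_rw [hlogQ, mul_sub, Finset.sum_sub_distrib, ← Finset.sum_mul, hQsum, one_mul,
      Finset.mul_sum]
    congr 1
    exact Finset.sum_congr rfl fun x _ => by ring
  have h2 : ∑ x, Q x * Real.log (Q x / P x)
      = (1 / (1 + ρ)) * (∑ x, Q x * Real.log (P x)) - Real.log S
        - ∑ x, Q x * Real.log (P x) := by
    simp_rw [hlogQP, mul_sub, Finset.sum_sub_distrib, ← Finset.sum_mul, hQsum, one_mul,
      Finset.mul_sum]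
    congr 2
    exact Finset.sum_congr rfl fun x _ => by ring
  rw [Real.log_rpow hSpos, h1, h2]
  field_simp
  ring
end

section
/- Let P be a joint PMF on X × Y with all values positive and ρ ∈ [0,1]. Define the conditional tilted distribution P^{(ρ)}_{X|Y}(x|y) = P(x,y)^{1/(1+ρ)} / ∑_{x'} P(x',y)^{1/(1+ρ)} and the output distribution P̄^{(ρ)}_Y(y) = (∑_x P(x,y)^{1/(1+ρ)})^{1+ρ} / ∑_{y'} (∑_x P(x,y')^{1/(1+ρ)})^{1+ρ}. Then ρ·H(P^{(ρ)}_{X|Y} | P̄^{(ρ)}_Y) − log ∑_y (∑_x P(x,y)^{1/(1+ρ)})^{1+ρ} = D(P̄^{(ρ)}_Y × P^{(ρ)}_{X|Y} ‖ P), where H(·|·) is conditional entropy and D is KL divergence. -/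
open Finset

/-- Gallager's conditional identity:
`ρ·H(P^{(ρ)}_{X|Y} | P̄^{(ρ)}_Y) − log ∑_y (∑_x P(x,y)^{1/(1+ρ)})^{1+ρ}
  = D(P̄^{(ρ)}_Y × P^{(ρ)}_{X|Y} ‖ P)`. -/
theorem gallager_identity_conditional {X Y : Type*} [Fintype X] [Fintype Y]
    [Nonempty X] [Nonempty Y] (P : X × Y → ℝ)
    (hPpos : ∀ p, 0 < P p) (hP1 : ∑ p, P p = 1)
    (ρ : ℝ) (hρ0 : 0 ≤ ρ) (hρ1 : ρ ≤ 1)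
    (V : X → Y → ℝ)
    (hV : ∀ x y, V x y = P (x, y) ^ (1 / (1 + ρ)) / ∑ x', P (x', y) ^ (1 / (1 + ρ)))
    (Q : Y → ℝ)
    (hQ : ∀ y, Q y = (∑ x, P (x, y) ^ (1 / (1 + ρ))) ^ (1 + ρ) /
      ∑ y', (∑ x, P (x, y') ^ (1 / (1 + ρ))) ^ (1 + ρ)) :
    ρ * (-∑ y, Q y * ∑ x, V x y * Real.log (V x y)) -
        Real.log (∑ y, (∑ x, P (x, y) ^ (1 / (1 + ρ))) ^ (1 + ρ)) =
      ∑ x, ∑ y, (Q y * V x y) * Real.log ((Q y * V x y) / P (x, y)) := by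
  have hρ : (0:ℝ) < 1 + ρ := by linarith
  set S : Y → ℝ := fun y => ∑ x, P (x, y) ^ (1 / (1 + ρ)) with hSdef
  set Z : ℝ := ∑ y, S y ^ (1 + ρ) with hZdef
  have hS : ∀ y, 0 < S y := fun y =>
    Finset.sum_pos (fun x _ => Real.rpow_pos_of_pos (hPpos _) _) Finset.univ_nonempty
  have hZ : 0 < Z :=
    Finset.sum_pos (fun y _ => Real.rpow_pos_of_pos (hS y) _) Finset.univ_nonempty
  have hVpos : ∀ x y, 0 < V x y := fun x y => by
    rw [hV]; exact div_pos (Real.rpow_pos_of_pos (hPpos _) _) (hS y)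
  have hQpos : ∀ y, 0 < Q y := fun y => by
    rw [hQ]; exact div_pos (Real.rpow_pos_of_pos (hS y) _) hZ
  have hVsum : ∀ y, ∑ x, V x y = 1 := by
    intro y
    simp only [hV]
    rw [← Finset.sum_div, div_self (hS y).ne']
  have hQsum : ∑ y, Q y = 1 := by
    simp only [hQ]
    rw [← Finset.sum_div, div_self hZ.ne']
  have hlogV : ∀ x y, Real.log (V x y)
      = (1 / (1 + ρ)) * Real.log (P (x, y)) - Real.log (S y) := by
    intro x y
    rw [hV, Real.log_div (Real.rpow_pos_of_pos (hPpos _) _).ne' (hS y).ne',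
      Real.log_rpow (hPpos _)]
  have hlogQ : ∀ y, Real.log (Q y) = (1 + ρ) * Real.log (S y) - Real.log Z := by
    intro y
    rw [hQ, Real.log_div (Real.rpow_pos_of_pos (hS y) _).ne' hZ.ne',
      Real.log_rpow (hS y)]
  have key : ∀ x y, Real.log ((Q y * V x y) / P (x, y))
      = -ρ * Real.log (V x y) - Real.log Z := by
    intro x y
    rw [Real.log_div (mul_pos (hQpos y) (hVpos x y)).ne' (hPpos _).ne',
      Real.log_mul (hQpos y).ne' (hVpos x y).ne', hlogQ, hlogV]
    field_simp
    ring
  have hRHS : ∑ x, ∑ y, (Q y * V x y) * Real.log ((Q y * V x y) / P (x, y))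
      = -ρ * ∑ y, Q y * ∑ x, V x y * Real.log (V x y) - Real.log Z := by
    rw [Finset.sum_comm]
    have step : ∀ y, ∑ x, (Q y * V x y) * Real.log ((Q y * V x y) / P (x, y))
        = -ρ * (Q y * ∑ x, V x y * Real.log (V x y)) - Q y * Real.log Z := by
      intro y
      have : ∑ x, (Q y * V x y) * Real.log ((Q y * V x y) / P (x, y))
          = ∑ x, (-ρ * (Q y * (V x y * Real.log (V x y))) - Q y * Real.log Z * V x y) := by
        refine Finset.sum_congr rfl fun x _ => ?_
        rw [key x y]; ring
      rw [this, Finset.sum_sub_distrib, ← Finset.mul_sum, ← Finset.mul_sum, ← Finset.mul_sum,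
        hVsum y]
      ring
    rw [Finset.sum_congr rfl fun y _ => step y, Finset.sum_sub_distrib, ← Finset.mul_sum,
      ← Finset.sum_mul, hQsum]
    ring
  rw [hRHS]
  ring
end

section
/- For a joint PMF P on X × Y with all values positive and ρ ∈ [0,1], the KL divergence D(P̄^{(ρ)}_Y × P^{(ρ)}_{X|Y} ‖ P) ≤ log |X|, where P^{(ρ)}_{X|Y} and P̄^{(ρ)}_Y are the tilted conditional and output distributions defined via P^{(ρ)}_{X|Y}(x|y) = P(x,y)^{1/(1+ρ)}/∑_{x'}P(x',y)^{1/(1+ρ)} and P̄^{(ρ)}_Y(y) ∝ (∑_x P(x,y)^{1/(1+ρ)})^{1+ρ}. -/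
open Finset

private lemma rpow_sum_le_sum_rpow' {ι : Type*} [Fintype ι] (f : ι → ℝ)
    (hf : ∀ i, 0 < f i) {t : ℝ} (ht : 0 < t) (ht1 : t ≤ 1) :
    (∑ i, f i) ^ t ≤ ∑ i, (f i) ^ t := by
  rcases isEmpty_or_nonempty ι with h | h
  · simp [Real.zero_rpow ht.ne']
  have hS : 0 < ∑ i, f i := Finset.sum_pos (fun i _ => hf i) univ_nonempty
  have key : ∀ i : ι, (∑ j, f j) ^ t * (f i / ∑ j, f j) ≤ (f i) ^ t := by
    intro i
    have hle : f i / ∑ j, f j ≤ 1 := by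
      rw [div_le_one hS]
      exact Finset.single_le_sum (fun j _ => (hf j).le) (mem_univ i)
    have hpos : 0 < f i / ∑ j, f j := div_pos (hf i) hS
    have h1 : (f i / ∑ j, f j) ^ (1 : ℝ) ≤ (f i / ∑ j, f j) ^ t :=
      Real.rpow_le_rpow_of_exponent_ge hpos hle ht1
    rw [Real.rpow_one] at h1
    calc (∑ j, f j) ^ t * (f i / ∑ j, f j)
        ≤ (∑ j, f j) ^ t * (f i / ∑ j, f j) ^ t := by
          exact mul_le_mul_of_nonneg_left h1 (Real.rpow_nonneg hS.le t)
      _ = (f i) ^ t := by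
          rw [← Real.mul_rpow hS.le (div_nonneg (hf i).le hS.le),
            mul_div_cancel₀ _ hS.ne']
  calc (∑ i, f i) ^ t = ∑ i, (∑ j, f j) ^ t * (f i / ∑ j, f j) := by
        rw [← Finset.mul_sum, ← Finset.sum_div, div_self hS.ne', mul_one]
    _ ≤ ∑ i, (f i) ^ t := Finset.sum_le_sum fun i _ => key i

private lemma entropy_le_log_card' {ι : Type*} [Fintype ι] [Nonempty ι] (v : ι → ℝ)
    (hv : ∀ i, 0 < v i) (h1 : ∑ i, v i = 1) :
    ∑ i, v i * (-Real.log (v i)) ≤ Real.log (Fintype.card ι) := by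
  have hcard : (∑ i, v i • (v i)⁻¹) = (Fintype.card ι : ℝ) := by
    simp only [smul_eq_mul]
    rw [Finset.sum_congr rfl (fun i _ => mul_inv_cancel₀ (hv i).ne')]
    simp [Finset.card_univ]
  have hjensen := ConcaveOn.le_map_sum (strictConcaveOn_log_Ioi.concaveOn)
    (t := univ) (w := v) (p := fun i => (v i)⁻¹)
    (fun i _ => (hv i).le) h1 (fun i _ => by
      simpa using inv_pos.mpr (hv i))
  rw [hcard] at hjensen
  refine le_trans (le_of_eq ?_) hjensen
  refine Finset.sum_congr rfl fun i _ => ?_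
  rw [smul_eq_mul, Real.log_inv]

/-- The KL divergence of the tilted product from `P` is at most `log |X|`:
`D(P̄^{(ρ)}_Y × P^{(ρ)}_{X|Y} ‖ P) ≤ log |X|`. -/
theorem kl_tilted_le_log_card {X Y : Type*} [Fintype X] [Fintype Y]
    [Nonempty X] [Nonempty Y] (P : X × Y → ℝ)
    (hPpos : ∀ p, 0 < P p) (hP1 : ∑ p, P p = 1)
    (ρ : ℝ) (hρ0 : 0 ≤ ρ) (hρ1 : ρ ≤ 1)
    (V : X → Y → ℝ)
    (hV : ∀ x y, V x y = P (x, y) ^ (1 / (1 + ρ)) / ∑ x', P (x', y) ^ (1 / (1 + ρ)))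
    (Q : Y → ℝ)
    (hQ : ∀ y, Q y = (∑ x, P (x, y) ^ (1 / (1 + ρ))) ^ (1 + ρ) /
      ∑ y', (∑ x, P (x, y') ^ (1 / (1 + ρ))) ^ (1 + ρ)) :
    ∑ x, ∑ y, (Q y * V x y) * Real.log ((Q y * V x y) / P (x, y)) ≤
      Real.log (Fintype.card X) := by
  have hρp : (0:ℝ) < 1 + ρ := by linarith
  set t : ℝ := 1 / (1 + ρ) with ht_def
  have ht : 0 < t := by positivity
  have ht1 : t ≤ 1 := by
    rw [ht_def, div_le_one hρp]; linarith
  set s : Y → ℝ := fun y => ∑ x, P (x, y) ^ t with hs_def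
  have hs : ∀ y, 0 < s y := fun y =>
    Finset.sum_pos (fun x _ => Real.rpow_pos_of_pos (hPpos _) t) univ_nonempty
  set Z : ℝ := ∑ y, (s y) ^ (1 + ρ) with hZ_def
  have hZpos : 0 < Z :=
    Finset.sum_pos (fun y _ => Real.rpow_pos_of_pos (hs y) _) univ_nonempty
  -- Z ≥ 1
  have hZ1 : 1 ≤ Z := by
    have hPY : ∀ y, (∑ x, P (x, y)) ≤ (s y) ^ (1 + ρ) := by
      intro y
      have h1 : (∑ x, P (x, y)) ^ t ≤ s y :=
        rpow_sum_le_sum_rpow' (fun x => P (x, y)) (fun x => hPpos _) ht ht1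
      have hPYpos : 0 < ∑ x, P (x, y) :=
        Finset.sum_pos (fun x _ => hPpos _) univ_nonempty
      have htρ : t * (1 + ρ) = 1 := by
        rw [ht_def]; field_simp
      calc (∑ x, P (x, y)) = ((∑ x, P (x, y)) ^ t) ^ (1 + ρ) := by
            rw [← Real.rpow_mul hPYpos.le, htρ, Real.rpow_one]
        _ ≤ (s y) ^ (1 + ρ) :=
            Real.rpow_le_rpow (Real.rpow_nonneg hPYpos.le t) h1 hρp.le
    calc (1:ℝ) = ∑ p : X × Y, P p := hP1.symm
      _ = ∑ x, ∑ y, P (x, y) := Fintype.sum_prod_type _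
      _ = ∑ y, ∑ x, P (x, y) := Finset.sum_comm
      _ ≤ Z := Finset.sum_le_sum fun y _ => hPY y
  have hVpos : ∀ x y, 0 < V x y := fun x y => by
    rw [hV]; exact div_pos (Real.rpow_pos_of_pos (hPpos _) t) (hs y)
  have hQpos : ∀ y, 0 < Q y := fun y => by
    rw [hQ]; exact div_pos (Real.rpow_pos_of_pos (hs y) _) hZpos
  have hVsum : ∀ y, ∑ x, V x y = 1 := by
    intro y
    simp only [hV]
    rw [← Finset.sum_div, div_self (hs y).ne']
  have hQsum : ∑ y, Q y = 1 := by
    simp only [hQ]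
    rw [← Finset.sum_div, div_self hZpos.ne']
  -- key pointwise identity for the log ratio
  have hlog : ∀ x y, Real.log ((Q y * V x y) / P (x, y)) =
      ρ * (-Real.log (V x y)) - Real.log Z := by
    intro x y
    have hlogV : Real.log (V x y) = t * Real.log (P (x, y)) - Real.log (s y) := by
      rw [hV, Real.log_div (Real.rpow_pos_of_pos (hPpos _) t).ne' (hs y).ne',
        Real.log_rpow (hPpos _)]
    have hlogQ : Real.log (Q y) = (1 + ρ) * Real.log (s y) - Real.log Z := by
      rw [hQ, Real.log_div (Real.rpow_pos_of_pos (hs y) _).ne' hZpos.ne',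
        Real.log_rpow (hs y)]
    have htρ : t * (1 + ρ) = 1 := by
      rw [ht_def]; field_simp
    have htρ : t * (1 + ρ) = 1 := by
      rw [ht_def]; field_simp
    rw [Real.log_div (mul_pos (hQpos y) (hVpos x y)).ne' (hPpos _).ne',
      Real.log_mul (hQpos y).ne' (hVpos x y).ne', hlogQ, hlogV]
    linear_combination Real.log (P (x, y)) * htρ
  have hlogZ : 0 ≤ Real.log Z := Real.log_nonneg hZ1
  have hcardX : (0:ℝ) ≤ Real.log (Fintype.card X) := by
    have : (1:ℝ) ≤ Fintype.card X := by exact_mod_cast Fintype.card_pos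
    exact Real.log_nonneg this
  calc ∑ x, ∑ y, (Q y * V x y) * Real.log ((Q y * V x y) / P (x, y))
      = ∑ y, ∑ x, (Q y * V x y) * (ρ * (-Real.log (V x y)) - Real.log Z) := by
        rw [Finset.sum_comm]
        exact Finset.sum_congr rfl fun y _ => Finset.sum_congr rfl fun x _ => by
          rw [hlog x y]
    _ = ∑ y, Q y * (ρ * (∑ x, V x y * (-Real.log (V x y))) - Real.log Z) := by
        refine Finset.sum_congr rfl fun y _ => ?_
        have expand : ∀ x, Q y * V x y * (ρ * -Real.log (V x y) - Real.log Z)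
            = Q y * ρ * (V x y * -Real.log (V x y)) - Q y * Real.log Z * V x y :=
          fun x => by ring
        rw [Finset.sum_congr rfl (fun x _ => expand x), Finset.sum_sub_distrib,
          ← Finset.mul_sum, ← Finset.mul_sum, hVsum y, mul_one]
        ring
    _ ≤ ∑ y, Q y * (ρ * Real.log (Fintype.card X)) := by
        refine Finset.sum_le_sum fun y _ => ?_
        refine mul_le_mul_of_nonneg_left ?_ (hQpos y).le
        have hent := entropy_le_log_card' (fun x => V x y) (fun x => hVpos x y) (hVsum y)
        nlinarith [mul_le_mul_of_nonneg_left hent hρ0]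
    _ = ρ * Real.log (Fintype.card X) := by
        rw [← Finset.sum_mul, hQsum, one_mul]
    _ ≤ Real.log (Fintype.card X) := by nlinarith
end

section
/- For a joint PMF P on X × Y with all values positive and ρ ∈ [0,1], the total variation distance between P and the product P̄^{(ρ)}_Y × P^{(ρ)}_{X|Y} satisfies ∑_{x,y} |P(x,y) − P̄^{(ρ)}_Y(y)P^{(ρ)}_{X|Y}(x|y)| ≤ 2(1 − |X|^{-ρ}). -/
open Finset

/-!
Both `P` and the tilted product `Q × V` are probability distributions on `X × Y`, so it
suffices to show `Q y V(x|y) ≥ |X|^{-ρ} P(x,y)` pointwise: then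
`|P - QV| = P + QV - 2 min(P, QV)` sums to at most `2 - 2|X|^{-ρ}`.
Writing `a_y = ∑_x P(x,y)^{1/(1+ρ)}` and `Z = ∑_y a_y^{1+ρ}`, we have
`Q y V(x|y) = a_y^ρ P(x,y)^{1/(1+ρ)} / Z`. The numerator is at least `P(x,y)` because
`P(x,y)^{1/(1+ρ)} ≤ a_y`, and the power mean inequality gives `a_y^{1+ρ} ≤ |X|^ρ ∑_x P(x,y)`,
hence `Z ≤ |X|^ρ`.
-/

theorem Finset.sum_abs_sub_le_of_mul_le {ι : Type*} {s : Finset ι} {p q : ι → ℝ} {c : ℝ}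
    (hp : ∀ i ∈ s, 0 ≤ p i) (hpq : ∀ i ∈ s, c * p i ≤ q i)
    (hp1 : ∑ i ∈ s, p i = 1) (hq1 : ∑ i ∈ s, q i = 1) :
    ∑ i ∈ s, |p i - q i| ≤ 2 * (1 - c) := by
  have hc : c ≤ 1 :=
    calc c = ∑ i ∈ s, c * p i := by rw [← mul_sum, hp1, mul_one]
      _ ≤ ∑ i ∈ s, q i := sum_le_sum hpq
      _ = 1 := hq1
  calc ∑ i ∈ s, |p i - q i| ≤ ∑ i ∈ s, (p i + q i - 2 * (c * p i)) := by
        refine sum_le_sum fun i hi => abs_sub_le_iff.2 ⟨?_, ?_⟩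
        · linarith [hpq i hi]
        · linarith [hpq i hi, mul_nonneg (sub_nonneg.2 hc) (hp i hi)]
    _ = 2 * (1 - c) := by
        rw [sum_sub_distrib, sum_add_distrib, ← mul_sum, ← mul_sum, hp1, hq1]
        ring

theorem Real.rpow_one_add_le_rpow_mul {u a ρ : ℝ} (hu : 0 ≤ u) (hua : u ≤ a) (hρ : 0 ≤ ρ) :
    u ^ (1 + ρ) ≤ a ^ ρ * u := by
  rw [Real.rpow_add' hu (by linarith), Real.rpow_one, mul_comm]
  exact mul_le_mul_of_nonneg_right (Real.rpow_le_rpow hu hua hρ) hu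

section Tilted

variable {X Y : Type*} [Fintype X] (P : X × Y → ℝ) (ρ : ℝ)

noncomputable def tiltedMass (y : Y) : ℝ :=
  ∑ x, P (x, y) ^ (1 / (1 + ρ))

/-- The conditional distribution `P^{(ρ)}_{X|Y}(x|y)`. -/
noncomputable def tiltedCond (x : X) (y : Y) : ℝ :=
  P (x, y) ^ (1 / (1 + ρ)) / tiltedMass P ρ y

/-- The marginal distribution `P̄^{(ρ)}_Y(y)`. -/
noncomputable def tiltedMarginal [Fintype Y] (y : Y) : ℝ :=
  tiltedMass P ρ y ^ (1 + ρ) / ∑ y', tiltedMass P ρ y' ^ (1 + ρ)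

variable {P ρ}

theorem tiltedMass_pos [Nonempty X] (hP : ∀ p, 0 < P p) (y : Y) : 0 < tiltedMass P ρ y :=
  sum_pos (fun _ _ => Real.rpow_pos_of_pos (hP _) _) univ_nonempty

theorem sum_tiltedMass_rpow_pos [Fintype Y] [Nonempty X] [Nonempty Y] (hP : ∀ p, 0 < P p) :
    0 < ∑ y, tiltedMass P ρ y ^ (1 + ρ) :=
  sum_pos (fun y _ => Real.rpow_pos_of_pos (tiltedMass_pos hP y) _) univ_nonempty

theorem sum_tiltedCond [Nonempty X] (hP : ∀ p, 0 < P p) (y : Y) :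
    ∑ x, tiltedCond P ρ x y = 1 := by
  simp only [tiltedCond, ← sum_div]
  exact div_self (tiltedMass_pos hP y).ne'

theorem sum_tiltedMarginal [Fintype Y] [Nonempty X] [Nonempty Y] (hP : ∀ p, 0 < P p) :
    ∑ y, tiltedMarginal P ρ y = 1 := by
  simp only [tiltedMarginal, ← sum_div]
  exact div_self (sum_tiltedMass_rpow_pos hP).ne'

theorem sum_tiltedMarginal_mul_tiltedCond [Fintype Y] [Nonempty X] [Nonempty Y]
    (hP : ∀ p, 0 < P p) :
    ∑ p : X × Y, tiltedMarginal P ρ p.2 * tiltedCond P ρ p.1 p.2 = 1 := by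
  rw [Fintype.sum_prod_type_right]
  simp only [← mul_sum, sum_tiltedCond hP, mul_one, sum_tiltedMarginal hP]

theorem le_tiltedMass_rpow_mul (hP : ∀ p, 0 ≤ P p) (hρ : 0 ≤ ρ) (x : X) (y : Y) :
    P (x, y) ≤ tiltedMass P ρ y ^ ρ * P (x, y) ^ (1 / (1 + ρ)) := by
  have hu := Real.rpow_nonneg (hP (x, y)) (1 / (1 + ρ))
  have hua : P (x, y) ^ (1 / (1 + ρ)) ≤ tiltedMass P ρ y :=
    single_le_sum (f := fun x' => P (x', y) ^ (1 / (1 + ρ)))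
      (fun _ _ => Real.rpow_nonneg (hP _) _) (mem_univ x)
  calc P (x, y) = (P (x, y) ^ (1 / (1 + ρ))) ^ (1 + ρ) := by
        rw [one_div, Real.rpow_inv_rpow (hP _) (by linarith)]
    _ ≤ _ := Real.rpow_one_add_le_rpow_mul hu hua hρ

theorem sum_tiltedMass_rpow_le [Fintype Y] (hP : ∀ p, 0 ≤ P p) (hP1 : ∑ p, P p = 1)
    (hρ : 0 ≤ ρ) :
    ∑ y, tiltedMass P ρ y ^ (1 + ρ) ≤ (Fintype.card X : ℝ) ^ ρ := by
  have hmean (y : Y) : tiltedMass P ρ y ^ (1 + ρ) ≤ (Fintype.card X : ℝ) ^ ρ * ∑ x, P (x, y) := by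
    have h := Real.rpow_sum_le_const_mul_sum_rpow_of_nonneg (s := univ)
      (f := fun x => P (x, y) ^ (1 / (1 + ρ))) (p := 1 + ρ) (by linarith)
      (fun _ _ => Real.rpow_nonneg (hP _) _)
    simpa only [tiltedMass, card_univ, add_sub_cancel_left, one_div,
      Real.rpow_inv_rpow (hP _) (by linarith : 1 + ρ ≠ 0)] using h
  calc ∑ y, tiltedMass P ρ y ^ (1 + ρ) ≤ ∑ y, (Fintype.card X : ℝ) ^ ρ * ∑ x, P (x, y) :=
        sum_le_sum fun y _ => hmean y
    _ = (Fintype.card X : ℝ) ^ ρ := by rw [← mul_sum, ← Fintype.sum_prod_type_right, hP1, mul_one]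

theorem card_rpow_neg_mul_le_tiltedMarginal_mul_tiltedCond [Fintype Y] [Nonempty X] [Nonempty Y]
    (hP : ∀ p, 0 < P p) (hP1 : ∑ p, P p = 1) (hρ : 0 ≤ ρ) (x : X) (y : Y) :
    (Fintype.card X : ℝ) ^ (-ρ) * P (x, y) ≤ tiltedMarginal P ρ y * tiltedCond P ρ x y := by
  have ha := tiltedMass_pos (ρ := ρ) hP y
  have hZ := sum_tiltedMass_rpow_pos (ρ := ρ) hP
  have hcard : (0 : ℝ) < Fintype.card X := by exact_mod_cast Fintype.card_pos
  have hprod : tiltedMarginal P ρ y * tiltedCond P ρ x y =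
      tiltedMass P ρ y ^ ρ * P (x, y) ^ (1 / (1 + ρ)) / ∑ y', tiltedMass P ρ y' ^ (1 + ρ) := by
    rw [tiltedMarginal, tiltedCond, Real.rpow_add ha, Real.rpow_one]
    field_simp
  rw [hprod, Real.rpow_neg hcard.le, inv_mul_eq_div]
  exact div_le_div₀
    (mul_nonneg (Real.rpow_nonneg ha.le _) (Real.rpow_nonneg (hP _).le _))
    (le_tiltedMass_rpow_mul (fun p => (hP p).le) hρ x y) hZ
    (sum_tiltedMass_rpow_le (fun p => (hP p).le) hP1 hρ)

end Tilted

theorem tv_tilted_product_le_general {X Y : Type*} [Fintype X] [Fintype Y]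
    [Nonempty X] [Nonempty Y] (P : X × Y → ℝ)
    (hPpos : ∀ p, 0 < P p) (hP1 : ∑ p, P p = 1)
    (ρ : ℝ) (hρ0 : 0 ≤ ρ)
    (V : X → Y → ℝ)
    (hV : ∀ x y, V x y = P (x, y) ^ (1 / (1 + ρ)) / ∑ x', P (x', y) ^ (1 / (1 + ρ)))
    (Q : Y → ℝ)
    (hQ : ∀ y, Q y = (∑ x, P (x, y) ^ (1 / (1 + ρ))) ^ (1 + ρ) /
      ∑ y', (∑ x, P (x, y') ^ (1 / (1 + ρ))) ^ (1 + ρ)) :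
    ∑ x, ∑ y, |P (x, y) - Q y * V x y| ≤
      2 * (1 - (Fintype.card X : ℝ) ^ (-ρ)) := by
  obtain rfl : V = tiltedCond P ρ := funext₂ hV
  obtain rfl : Q = tiltedMarginal P ρ := funext hQ
  have h := sum_abs_sub_le_of_mul_le (s := univ) (p := P)
    (q := fun p => tiltedMarginal P ρ p.2 * tiltedCond P ρ p.1 p.2)
    (c := (Fintype.card X : ℝ) ^ (-ρ)) (fun p _ => (hPpos p).le)
    (fun ⟨x, y⟩ _ => card_rpow_neg_mul_le_tiltedMarginal_mul_tiltedCond hPpos hP1 hρ0 x y)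
    hP1 (sum_tiltedMarginal_mul_tiltedCond hPpos)
  rwa [Fintype.sum_prod_type] at h

/-- Total variation bound:
`∑_{x,y} |P(x,y) − P̄^{(ρ)}_Y(y) P^{(ρ)}_{X|Y}(x|y)| ≤ 2 (1 − |X|^{-ρ})`. -/
theorem tv_tilted_product_le {X Y : Type*} [Fintype X] [Fintype Y]
    [Nonempty X] [Nonempty Y] (P : X × Y → ℝ)
    (hPpos : ∀ p, 0 < P p) (hP1 : ∑ p, P p = 1)
    (ρ : ℝ) (hρ0 : 0 ≤ ρ) (hρ1 : ρ ≤ 1)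
    (V : X → Y → ℝ)
    (hV : ∀ x y, V x y = P (x, y) ^ (1 / (1 + ρ)) / ∑ x', P (x', y) ^ (1 / (1 + ρ)))
    (Q : Y → ℝ)
    (hQ : ∀ y, Q y = (∑ x, P (x, y) ^ (1 / (1 + ρ))) ^ (1 + ρ) /
      ∑ y', (∑ x, P (x, y') ^ (1 / (1 + ρ))) ^ (1 + ρ)) :
    ∑ x, ∑ y, |P (x, y) - Q y * V x y| ≤
      2 * (1 - (Fintype.card X : ℝ) ^ (-ρ)) :=
  tv_tilted_product_le_general P hPpos hP1 ρ hρ0 V hV Q hQ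
end

section
/- Let α = |X|(|X|−1) and ε_n = α·ln(1 + α/(n−α)). For any n ≥ α and any PMF P on the finite set X, there exists an n-type P̄ on X (a PMF with all values integer multiples of 1/n) such that the variational distance satisfies ∑_x |P(x) − P̄(x)| ≤ 2(|X|−1)/n, and the n-fold product distributions satisfy P^n(x^n) ≤ P̄^n(x^n) · e^{α + ε_n} for all x^n ∈ X^n. -/
/-!
Take `c = n - (|X| - 1)` and round each `c · P x` up to an integer. The rounded counts overshoot
`c` by less than `|X|`, so they sum to at most `n`, and the deficit can be put on any one letter.
The resulting `n`-type `Q` satisfies `Q ≥ (c/n) P` pointwise: this gives the variational bound,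
since `P - Q ≤ ((|X| - 1)/n) P`, and it gives `P^n ≤ (n/c)^n Q^n ≤ e^{n (n/c - 1)} Q^n ≤ e^α Q^n`.
-/

open Finset

section FiniteSums

variable {ι : Type*} [Fintype ι]

theorem exists_nat_sum_eq_of_add_card_le [Nonempty ι] {P : ι → ℝ} (hP0 : ∀ i, 0 ≤ P i)
    (hP1 : ∑ i, P i = 1) {n : ℕ} {c : ℝ} (hc : 0 ≤ c)
    (hcn : c + (Fintype.card ι - 1) ≤ n) :
    ∃ M : ι → ℕ, ∑ i, M i = n ∧ ∀ i, c * P i ≤ M i := by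
  classical
  set m : ι → ℕ := fun i => ⌈c * P i⌉₊
  have hm_lt : ((∑ i, m i : ℕ) : ℝ) < n + 1 := calc
    ((∑ i, m i : ℕ) : ℝ) = ∑ i, (m i : ℝ) := Nat.cast_sum _ _
    _ < ∑ i, (c * P i + 1) :=
      sum_lt_sum_of_nonempty univ_nonempty fun i _ => Nat.ceil_lt_add_one (mul_nonneg hc (hP0 i))
    _ = c + Fintype.card ι := by simp [sum_add_distrib, ← mul_sum, hP1]
    _ ≤ n + 1 := by linarith
  have hm_le : ∑ i, m i ≤ n := by
    have : ∑ i, m i < n + 1 := by exact_mod_cast hm_lt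
    omega
  obtain ⟨i₀⟩ := ‹Nonempty ι›
  refine ⟨fun i => m i + if i = i₀ then n - ∑ j, m j else 0, ?_, fun i => ?_⟩
  · simp only [sum_add_distrib, sum_ite_eq', mem_univ, if_true]
    omega
  · exact (Nat.le_ceil _).trans (by exact_mod_cast Nat.le_add_right _ _)

theorem exists_nType_mul_le [Nonempty ι] {P : ι → ℝ} (hP0 : ∀ i, 0 ≤ P i)
    (hP1 : ∑ i, P i = 1) {n : ℕ} (hn : 0 < n) {c : ℝ} (hc : 0 ≤ c)
    (hcn : c + (Fintype.card ι - 1) ≤ n) :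
    ∃ Q : ι → ℝ, (∀ i, 0 ≤ Q i) ∧ ∑ i, Q i = 1 ∧ (∀ i, ∃ m : ℕ, m ≤ n ∧ Q i = m / n) ∧
      ∀ i, c * P i ≤ n * Q i := by
  obtain ⟨M, hM, hPM⟩ := exists_nat_sum_eq_of_add_card_le hP0 hP1 hc hcn
  have hn0 : (n : ℝ) ≠ 0 := by positivity
  refine ⟨fun i => M i / n, fun i => by positivity, ?_,
    fun i => ⟨M i, hM ▸ single_le_sum (fun _ _ => Nat.zero_le _) (mem_univ i), rfl⟩,
    fun i => by rw [mul_div_cancel₀ _ hn0]; exact hPM i⟩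
  rw [← sum_div, ← Nat.cast_sum, hM, div_self hn0]

theorem sum_abs_eq_two_mul_sum_posPart {a : ι → ℝ} (h : ∑ i, a i = 0) :
    ∑ i, |a i| = 2 * ∑ i, (a i)⁺ := by
  have := sum_congr rfl fun i (_ : i ∈ univ) => abs_add_eq_two_nsmul_posPart (a i)
  simp only [sum_add_distrib, h, add_zero, nsmul_eq_mul, Nat.cast_ofNat] at this
  rw [this, mul_sum]

theorem sum_abs_sub_le_of_sub_le_mul {P Q : ι → ℝ} {δ : ℝ} (hδ : 0 ≤ δ) (hP0 : ∀ i, 0 ≤ P i)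
    (hsum : ∑ i, P i = ∑ i, Q i) (h : ∀ i, P i - Q i ≤ δ * P i) :
    ∑ i, |P i - Q i| ≤ 2 * δ * ∑ i, P i := by
  rw [sum_abs_eq_two_mul_sum_posPart (by rw [sum_sub_distrib, hsum, sub_self]), mul_assoc,
    mul_sum _ _ δ]
  gcongr with i
  exact max_le (h i) (mul_nonneg hδ (hP0 i))

end FiniteSums

theorem Real.pow_le_exp_mul_sub_one {y : ℝ} (hy : 0 ≤ y) (n : ℕ) :
    y ^ n ≤ Real.exp (n * (y - 1)) := by
  rw [Real.exp_nat_mul]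
  exact pow_le_pow_left₀ hy (by linarith [Real.add_one_le_exp (y - 1)]) n

section Products

variable {ι X : Type*} [Fintype ι] {P Q : X → ℝ} {r : ℝ}

theorem prod_le_pow_card_mul_prod (hP0 : ∀ x, 0 ≤ P x) (h : ∀ x, P x ≤ r * Q x) (xs : ι → X) :
    ∏ i, P (xs i) ≤ r ^ Fintype.card ι * ∏ i, Q (xs i) := calc
  ∏ i, P (xs i) ≤ ∏ i, r * Q (xs i) :=
    prod_le_prod (fun i _ => hP0 (xs i)) fun i _ => h (xs i)
  _ = r ^ Fintype.card ι * ∏ i, Q (xs i) := by rw [prod_mul_distrib, prod_const, card_univ]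

theorem prod_le_prod_mul_exp (hr : 0 ≤ r) (hP0 : ∀ x, 0 ≤ P x)
    (hQ0 : ∀ x, 0 ≤ Q x) (h : ∀ x, P x ≤ r * Q x) (xs : ι → X) :
    ∏ i, P (xs i) ≤ (∏ i, Q (xs i)) * Real.exp (Fintype.card ι * (r - 1)) := by
  rw [mul_comm]
  refine (prod_le_pow_card_mul_prod hP0 h xs).trans ?_
  gcongr
  · exact prod_nonneg fun i _ => hQ0 (xs i)
  · exact Real.pow_le_exp_mul_sub_one hr _

end Products

theorem Real.mul_log_one_add_div_sub_nonneg {α n : ℝ} (hα : 0 ≤ α) (hn : α ≤ n) :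
    0 ≤ α * Real.log (1 + α / (n - α)) :=
  mul_nonneg hα (Real.log_nonneg (by linarith [div_nonneg hα (sub_nonneg.mpr hn)]))

section Arithmetic

variable {k : ℕ} {n : ℝ}

theorem cast_le_of_mul_sub_one_le (hk : 2 ≤ k) (h : k * (k - 1 : ℝ) ≤ n) : (k : ℝ) ≤ n := by
  have : (2 : ℝ) ≤ k := by exact_mod_cast hk
  nlinarith

theorem sub_sub_one_pos (hk : 1 ≤ k) (hn : 0 < n) (h : k * (k - 1 : ℝ) ≤ n) :
    0 < n - (k - 1) := by
  obtain rfl | hk := hk.eq_or_lt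
  · simpa using hn
  · linarith [cast_le_of_mul_sub_one_le hk h]

/-- `n (n/c - 1) = n (k-1)/c` with `c = n - (k-1)`, and `k (k-1) c - n (k-1) = (k-1)² (n-k)`. -/
theorem mul_div_sub_sub_one_sub_one_le (hk : 1 ≤ k) (hn : 0 < n) (h : k * (k - 1 : ℝ) ≤ n) :
    n * (n / (n - (k - 1)) - 1) ≤ k * (k - 1) := by
  have hc := sub_sub_one_pos hk hn h
  rw [div_sub_one hc.ne', sub_sub_cancel, mul_div_assoc', div_le_iff₀ hc]
  have hsq : 0 ≤ ((k : ℝ) - 1) ^ 2 * (n - k) := by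
    obtain rfl | hk := hk.eq_or_lt
    · simp
    · exact mul_nonneg (sq_nonneg _) (sub_nonneg.mpr (cast_le_of_mul_sub_one_le hk h))
  nlinarith

end Arithmetic

theorem exists_nType_approx_general {X : Type*} [Fintype X]
    (n : ℕ) (hn1 : 0 < n)
    (α : ℝ) (hα : α = (Fintype.card X : ℝ) * ((Fintype.card X : ℝ) - 1))
    (hn : α ≤ n)
    (P : X → ℝ) (hP0 : ∀ x, 0 ≤ P x) (hP1 : ∑ x, P x = 1) :
    ∃ Q : X → ℝ, (∀ x, 0 ≤ Q x) ∧ (∑ x, Q x = 1) ∧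
      (∀ x, ∃ m : ℕ, m ≤ n ∧ Q x = (m : ℝ) / n) ∧
      (∑ x, |P x - Q x| ≤ 2 * ((Fintype.card X : ℝ) - 1) / n) ∧
      (∀ xs : Fin n → X, (∏ i, P (xs i)) ≤
        (∏ i, Q (xs i)) * Real.exp (α + α * Real.log (1 + α / ((n : ℝ) - α)))) := by
  obtain ⟨x₀, -, -⟩ := exists_ne_zero_of_sum_ne_zero (hP1.trans_ne one_ne_zero)
  have : Nonempty X := ⟨x₀⟩
  set k := Fintype.card X
  have hk : 1 ≤ k := Fintype.card_pos
  have hn0 : (0 : ℝ) < n := by exact_mod_cast hn1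
  have hkn : (k : ℝ) * (k - 1) ≤ n := hα ▸ hn
  have hc : 0 < (n : ℝ) - (k - 1) := sub_sub_one_pos hk hn0 hkn
  obtain ⟨Q, hQ0, hQ1, hQn, hPQ⟩ :=
    exists_nType_mul_le hP0 hP1 hn1 hc.le (sub_add_cancel (n : ℝ) _).le
  refine ⟨Q, hQ0, hQ1, hQn, ?_, fun xs => ?_⟩
  · have hδ : 0 ≤ ((k : ℝ) - 1) / n := div_nonneg (by simpa using hk) hn0.le
    calc ∑ x, |P x - Q x| ≤ 2 * (((k : ℝ) - 1) / n) * ∑ x, P x :=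
          sum_abs_sub_le_of_sub_le_mul hδ hP0 (hP1.trans hQ1.symm) fun x => by
            rw [div_mul_eq_mul_div, le_div_iff₀ hn0]; linarith [hPQ x]
      _ = 2 * ((k : ℝ) - 1) / n := by rw [hP1]; ring
  · calc ∏ i, P (xs i) ≤ (∏ i, Q (xs i)) * Real.exp (n * (n / (n - (k - 1)) - 1)) := by
          simpa only [Fintype.card_fin] using prod_le_prod_mul_exp (by positivity) hP0 hQ0
            (fun x => by rw [div_mul_eq_mul_div, le_div_iff₀' hc]; exact hPQ x) xs
      _ ≤ _ := by
          refine mul_le_mul_of_nonneg_left (Real.exp_le_exp.mpr ?_) (prod_nonneg fun i _ => hQ0 _)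
          have hα0 : 0 ≤ α := hα ▸ mul_nonneg k.cast_nonneg (by simpa using hk)
          linarith [mul_div_sub_sub_one_sub_one_le hk hn0 hkn,
            Real.mul_log_one_add_div_sub_nonneg hα0 hn]

/-- Approximation of a PMF by an `n`-type: for `n ≥ α = |X|(|X|−1)` there is an
`n`-type `Q` with `∑ x, |P x − Q x| ≤ 2(|X|−1)/n` and
`P^n(x^n) ≤ Q^n(x^n) · e^{α + ε_n}` where `ε_n = α ln(1 + α/(n−α))`. -/
theorem exists_nType_approx {X : Type*} [Fintype X] [Nonempty X]
    (n : ℕ) (hn1 : 0 < n)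
    (α : ℝ) (hα : α = (Fintype.card X : ℝ) * ((Fintype.card X : ℝ) - 1))
    (hn : α ≤ n)
    (P : X → ℝ) (hP0 : ∀ x, 0 ≤ P x) (hP1 : ∑ x, P x = 1) :
    ∃ Q : X → ℝ, (∀ x, 0 ≤ Q x) ∧ (∑ x, Q x = 1) ∧
      (∀ x, ∃ m : ℕ, m ≤ n ∧ Q x = (m : ℝ) / n) ∧
      (∑ x, |P x - Q x| ≤ 2 * ((Fintype.card X : ℝ) - 1) / n) ∧
      (∀ xs : Fin n → X, (∏ i, P (xs i)) ≤
        (∏ i, Q (xs i)) * Real.exp (α + α * Real.log (1 + α / ((n : ℝ) - α)))) :=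
  exists_nType_approx_general n hn1 α hα hn P hP0 hP1
end

section
/- Let S_n be a nonempty finite set of PMFs on X^n × Y^n and Q_n = (1/|S_n|) ∑_{P ∈ S_n} P their uniform mixture. Then for any ρ ∈ [0,1], E_n^{(1)}(ρ, Q_n) ≤ (1/n) log |S_n| + max_{P ∈ S_n} E_n^{(1)}(ρ, P), where E_n^{(1)}(ρ, R) = (1/n) log ∑_{y^n} (∑_{x^n} R(x^n, y^n)^{1/(1+ρ)})^{1+ρ}. -/
/-!
Writing `r = 1/(1+ρ)` and `N = |S|`, subadditivity of `t ↦ t^r` bounds the inner sum of the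
mixture `(1/N) ∑ P` by `N^{-r} ∑_P ∑_x P^r`, and the power-mean inequality for `t ↦ t^{1+ρ}`
turns the `(1+ρ)`-th power of a sum of `N` terms into at most `N^ρ` times the sum of the powers.
Since `r (1+ρ) = 1`, the Gallager sum of the mixture is at most `N^ρ` times the largest Gallager
sum of its components; taking logarithms and using `ρ ≤ 1` gives the bound.
-/

open Finset

theorem Real.rpow_sum_le_sum_rpow {ι : Type*} (s : Finset ι) {f : ι → ℝ}
    (hf : ∀ i ∈ s, 0 ≤ f i) {p : ℝ} (hp0 : 0 < p) (hp1 : p ≤ 1) :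
    (∑ i ∈ s, f i) ^ p ≤ ∑ i ∈ s, f i ^ p :=
  le_sum_of_subadditive_on_pred (· ^ p) (0 ≤ ·) (Real.zero_rpow hp0.ne').le
    (fun _ _ hx hy => Real.rpow_add_le_add_rpow hx hy hp0.le hp1)
    (fun _ _ => add_nonneg) f hf

/-- The exponentiated Gallager function `exp (n E_n^{(1)}(ρ, R))`, with `a` the input and `b`
the output. -/
noncomputable def gallagerSum {α β : Type*} [Fintype α] [Fintype β] (ρ : ℝ) (R : α × β → ℝ) :
    ℝ :=
  ∑ b, (∑ a, R (a, b) ^ (1 / (1 + ρ))) ^ (1 + ρ)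

section Gallager

variable {α β : Type*} [Fintype α] [Fintype β] {ρ : ℝ}

theorem gallagerSum_const_mul (hρ : 1 + ρ ≠ 0) {c : ℝ} (hc : 0 ≤ c) (R : α × β → ℝ)
    (hR : ∀ a, 0 ≤ R a) : gallagerSum ρ (fun a => c * R a) = c * gallagerSum ρ R := by
  have hexp : 1 / (1 + ρ) * (1 + ρ) = 1 := by field_simp
  simp only [gallagerSum, mul_sum]
  refine sum_congr rfl fun b _ => ?_
  simp only [Real.mul_rpow hc (hR _), ← mul_sum]
  rw [Real.mul_rpow (Real.rpow_nonneg hc _) (sum_nonneg fun _ _ => Real.rpow_nonneg (hR _) _),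
    ← Real.rpow_mul hc, hexp, Real.rpow_one]

theorem gallagerSum_sum_le (hρ : 0 ≤ ρ) (S : Finset (α × β → ℝ))
    (hS : ∀ P ∈ S, ∀ a, 0 ≤ P a) :
    gallagerSum ρ (fun a => ∑ P ∈ S, P a) ≤ (#S : ℝ) ^ ρ * ∑ P ∈ S, gallagerSum ρ P := by
  have hr0 : 0 < 1 / (1 + ρ) := by positivity
  have hr1 : 1 / (1 + ρ) ≤ 1 := by rw [div_le_one (by positivity)]; linarith
  set A : (α × β → ℝ) → β → ℝ := fun P b => ∑ a, P (a, b) ^ (1 / (1 + ρ))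
  have hA : ∀ P ∈ S, ∀ b, 0 ≤ A P b :=
    fun P hP b => sum_nonneg fun _ _ => Real.rpow_nonneg (hS P hP _) _
  have inner_le : ∀ b, ∑ a, (∑ P ∈ S, P (a, b)) ^ (1 / (1 + ρ)) ≤ ∑ P ∈ S, A P b := fun b => by
    rw [sum_comm]
    exact sum_le_sum fun a _ =>
      Real.rpow_sum_le_sum_rpow S (fun P hP => hS P hP _) hr0 hr1
  calc gallagerSum ρ (fun a => ∑ P ∈ S, P a)
      ≤ ∑ b, (∑ P ∈ S, A P b) ^ (1 + ρ) := by
        refine sum_le_sum fun b _ => Real.rpow_le_rpow ?_ (inner_le b) (by positivity)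
        exact sum_nonneg fun _ _ => Real.rpow_nonneg (sum_nonneg fun P hP => hS P hP _) _
    _ ≤ ∑ b, (#S : ℝ) ^ ρ * ∑ P ∈ S, A P b ^ (1 + ρ) := by
        refine sum_le_sum fun b _ => ?_
        simpa using Real.rpow_sum_le_const_mul_sum_rpow_of_nonneg S (f := fun P => A P b)
          (p := 1 + ρ) (by linarith) (fun P hP => hA P hP b)
    _ = (#S : ℝ) ^ ρ * ∑ P ∈ S, gallagerSum ρ P := by
        rw [← mul_sum, sum_comm]
        rfl

theorem sum_le_gallagerSum (hρ : 0 ≤ ρ) (R : α × β → ℝ) (hR : ∀ a, 0 ≤ R a) :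
    ∑ a, R a ≤ gallagerSum ρ R := by
  have hexp : 1 / (1 + ρ) * (1 + ρ) = 1 := by field_simp
  have hr1 : 1 / (1 + ρ) ≤ 1 := by rw [div_le_one (by positivity)]; linarith
  rw [Fintype.sum_prod_type_right]
  refine sum_le_sum fun b _ => ?_
  have hmass : 0 ≤ ∑ a, R (a, b) := sum_nonneg fun _ _ => hR _
  calc ∑ a, R (a, b) = ((∑ a, R (a, b)) ^ (1 / (1 + ρ))) ^ (1 + ρ) := by
        rw [← Real.rpow_mul hmass, hexp, Real.rpow_one]
    _ ≤ (∑ a, R (a, b) ^ (1 / (1 + ρ))) ^ (1 + ρ) :=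
        Real.rpow_le_rpow (Real.rpow_nonneg hmass _)
          (Real.rpow_sum_le_sum_rpow _ (fun _ _ => hR _) (by positivity) hr1) (by positivity)

theorem gallagerSum_mixture_le (hρ : 0 ≤ ρ) (S : Finset (α × β → ℝ)) (hS : S.Nonempty)
    (hnonneg : ∀ P ∈ S, ∀ a, 0 ≤ P a) :
    gallagerSum ρ (fun a => (#S : ℝ)⁻¹ * ∑ P ∈ S, P a) ≤
      (#S : ℝ) ^ ρ * S.sup' hS (gallagerSum ρ) := by
  have hN : (0 : ℝ) < #S := by exact_mod_cast hS.card_pos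
  rw [gallagerSum_const_mul (by positivity) (inv_nonneg.2 hN.le) _
    fun a => sum_nonneg fun P hP => hnonneg P hP a]
  calc (#S : ℝ)⁻¹ * gallagerSum ρ (fun a => ∑ P ∈ S, P a)
      ≤ (#S : ℝ)⁻¹ * ((#S : ℝ) ^ ρ * ∑ P ∈ S, gallagerSum ρ P) := by
        gcongr
        exact gallagerSum_sum_le hρ S hnonneg
    _ ≤ (#S : ℝ)⁻¹ * ((#S : ℝ) ^ ρ * (#S • S.sup' hS (gallagerSum ρ))) := by
        gcongr
        exact sum_le_card_nsmul _ _ _ fun P hP => le_sup' _ hP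
    _ = (#S : ℝ) ^ ρ * S.sup' hS (gallagerSum ρ) := by
        rw [nsmul_eq_mul]
        field_simp

end Gallager

theorem mixture_gallager_E1_general {X Y : Type*} [Fintype X] [Fintype Y]
    (n : ℕ)
    (S : Finset (((Fin n → X) × (Fin n → Y)) → ℝ)) (hS : S.Nonempty)
    (hpmf : ∀ P ∈ S, (∀ a, 0 ≤ P a) ∧ ∑ a, P a = 1)
    (ρ : ℝ) (hρ0 : 0 ≤ ρ) (hρ1 : ρ ≤ 1) :
    (1 / n : ℝ) * Real.log
        (∑ y : Fin n → Y, (∑ x : Fin n → X,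
          ((S.card : ℝ)⁻¹ * ∑ P ∈ S, P (x, y)) ^ (1 / (1 + ρ))) ^ (1 + ρ)) ≤
      (1 / n : ℝ) * Real.log S.card +
        S.sup' hS (fun P => (1 / n : ℝ) * Real.log
          (∑ y : Fin n → Y, (∑ x : Fin n → X, P (x, y) ^ (1 / (1 + ρ))) ^ (1 + ρ))) := by
  set Q := fun a => (#S : ℝ)⁻¹ * ∑ P ∈ S, P a
  have hN : (1 : ℝ) ≤ #S := by exact_mod_cast hS.card_pos
  obtain ⟨P₀, hP₀, hmax⟩ := exists_mem_eq_sup' hS (gallagerSum ρ)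
  have hmix := gallagerSum_mixture_le hρ0 S hS fun P hP => (hpmf P hP).1
  have hQ_mass : ∑ a, Q a = 1 := by
    simp only [Q, ← mul_sum]
    rw [sum_comm, sum_congr rfl fun P hP => (hpmf P hP).2, sum_const, nsmul_one]
    exact inv_mul_cancel₀ (by positivity)
  have hQ_nonneg : ∀ a, 0 ≤ Q a :=
    fun a => mul_nonneg (by positivity) (sum_nonneg fun P hP => (hpmf P hP).1 a)
  have hQ : 0 < gallagerSum ρ Q := by
    linarith [sum_le_gallagerSum hρ0 Q hQ_nonneg]
  have hP₀_pos : 0 < gallagerSum ρ P₀ := by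
    linarith [sum_le_gallagerSum hρ0 P₀ (hpmf P₀ hP₀).1, (hpmf P₀ hP₀).2]
  change (1 / n : ℝ) * Real.log (gallagerSum ρ Q) ≤
    _ + S.sup' hS fun P => _ * Real.log (gallagerSum ρ P)
  calc (1 / n : ℝ) * Real.log (gallagerSum ρ Q)
      ≤ (1 / n : ℝ) * Real.log ((#S : ℝ) ^ ρ * gallagerSum ρ P₀) := by
        gcongr
        exact hmax ▸ hmix
    _ = (1 / n : ℝ) * (ρ * Real.log #S) + (1 / n : ℝ) * Real.log (gallagerSum ρ P₀) := by
        rw [Real.log_mul (by positivity) hP₀_pos.ne', Real.log_rpow (by positivity), mul_add]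
    _ ≤ (1 / n : ℝ) * Real.log #S +
          S.sup' hS fun P => (1 / n : ℝ) * Real.log (gallagerSum ρ P) := by
        gcongr
        · exact mul_le_of_le_one_left (Real.log_nonneg hN) hρ1
        · exact le_sup' (fun P => (1 / n : ℝ) * Real.log (gallagerSum ρ P)) hP₀

/-- Gallager-function bound for a uniform mixture:
`E_n^{(1)}(ρ, Q_n) ≤ (1/n) log |S_n| + max_{P ∈ S_n} E_n^{(1)}(ρ, P)`. -/
theorem mixture_gallager_E1 {X Y : Type*} [Fintype X] [Fintype Y]
    [Nonempty X] [Nonempty Y] (n : ℕ) (hn : 0 < n)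
    (S : Finset (((Fin n → X) × (Fin n → Y)) → ℝ)) (hS : S.Nonempty)
    (hpmf : ∀ P ∈ S, (∀ a, 0 ≤ P a) ∧ ∑ a, P a = 1)
    (ρ : ℝ) (hρ0 : 0 ≤ ρ) (hρ1 : ρ ≤ 1) :
    (1 / n : ℝ) * Real.log
        (∑ y : Fin n → Y, (∑ x : Fin n → X,
          ((S.card : ℝ)⁻¹ * ∑ P ∈ S, P (x, y)) ^ (1 / (1 + ρ))) ^ (1 + ρ)) ≤
      (1 / n : ℝ) * Real.log S.card +
        S.sup' hS (fun P => (1 / n : ℝ) * Real.log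
          (∑ y : Fin n → Y, (∑ x : Fin n → X, P (x, y) ^ (1 / (1 + ρ))) ^ (1 + ρ))) :=
  mixture_gallager_E1_general n S hS hpmf ρ hρ0 hρ1
end

section
/- Let P, Q be PMFs on a finite set X with ∑_x |P(x) − Q(x)| ≤ δ for some δ ∈ [0,1] and |X| ≥ 2. Then |H(P) − H(Q)| ≤ (δ/2)·log(|X|−1) + h(δ/2), where h(p) = −p log p − (1−p) log(1−p) is the binary entropy function. -/
/-!
Work in nats with `negMulLog x = -x log x`. Put `m = min P Q` and `s = ∑ (P - m) = ∑ |P - Q| / 2`,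
so that `P = m + (P - m)` and `Q = m + (Q - m)` with both excess parts of mass `s`.
Subadditivity of `negMulLog`, together with Jensen's inequality on the support of `P - m`
(which misses any point where `P ≤ Q`, hence has at most `|X| - 1` points), gives
`H(P) ≤ H(m) - s log s + s log (|X| - 1)`. Writing `Q` as the mixture with weights `1 - s, s` of
`m / (1 - s)` and `(Q - m) / s`, concavity gives `H(Q) ≥ H(m) + (1 - s) log (1 - s)`.
Hence `H(P) - H(Q) ≤ s log (|X| - 1) + h(s)`, which is monotone in `s ≤ δ / 2 ≤ 1 / 2`.
-/

open Finset Real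

namespace Real

lemma negMulLog_add_le {u v : ℝ} (hu : 0 ≤ u) (hv : 0 ≤ v) :
    negMulLog (u + v) ≤ negMulLog u + negMulLog v := by
  have key : ∀ {a b : ℝ}, 0 ≤ a → 0 ≤ b → a * log a ≤ a * log (a + b) := by
    intro a b ha hb
    rcases ha.eq_or_lt with rfl | ha
    · simp
    · exact mul_le_mul_of_nonneg_left (log_le_log ha (le_add_of_nonneg_right hb)) ha.le
  have hu' := key hu hv
  have hv' := key hv hu
  rw [add_comm v u] at hv'
  simp only [negMulLog_eq_neg]
  linarith

lemma negMulLog_add_mul_log_le {a b t : ℝ} (ha : 0 ≤ a) (hb : 0 ≤ b) (ht : 0 < t)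
    (hbt : b ≤ 1 - t) : negMulLog a + a * log t ≤ negMulLog (a + b) := by
  rcases (hb.trans hbt).eq_or_lt with h1t | h1t
  · obtain rfl : b = 0 := le_antisymm (h1t ▸ hbt) hb
    have : t = 1 := by linarith
    simp [this]
  have hconc := concaveOn_negMulLog.2 (Set.mem_Ici.2 (div_nonneg ha ht.le))
    (Set.mem_Ici.2 (div_nonneg hb h1t.le)) ht.le h1t.le (add_sub_cancel t 1)
  have hsplit : t * (a / t) + (1 - t) * (b / (1 - t)) = a + b := by
    field_simp
  have hscale : t * negMulLog (a / t) = negMulLog a + a * log t := by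
    have := negMulLog_mul t (a / t)
    rw [mul_div_cancel₀ a ht.ne'] at this
    have hlog : a / t * negMulLog t = -(a * log t) := by
      rw [negMulLog]
      field_simp
    linarith
  have hb1 : 0 ≤ negMulLog (b / (1 - t)) :=
    negMulLog_nonneg (div_nonneg hb h1t.le) ((div_le_one h1t).2 hbt)
  simp only [smul_eq_mul, hsplit] at hconc
  nlinarith [mul_nonneg h1t.le hb1]

lemma sum_negMulLog_le {ι : Type*} (s : Finset ι) {a : ι → ℝ} (ha : ∀ i ∈ s, 0 ≤ a i) :
    ∑ i ∈ s, negMulLog (a i) ≤ negMulLog (∑ i ∈ s, a i) + (∑ i ∈ s, a i) * log #s := by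
  rcases s.eq_empty_or_nonempty with rfl | hs
  · simp
  have hcard : (0 : ℝ) < #s := by exact_mod_cast hs.card_pos
  have jensen := concaveOn_negMulLog.le_map_sum (t := s) (w := fun _ => (#s : ℝ)⁻¹) (p := a)
    (fun _ _ => by positivity) (by simp [hcard.ne']) ha
  simp only [smul_eq_mul, ← mul_sum] at jensen
  rw [mul_comm, negMulLog_mul, negMulLog, log_inv] at jensen
  have := mul_le_mul_of_nonneg_left jensen hcard.le
  field_simp at this
  linarith

end Real

lemma neg_sum_mul_logb {ι : Type*} (s : Finset ι) (f : ι → ℝ) (b : ℝ) :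
    -∑ i ∈ s, f i * logb b (f i) = (∑ i ∈ s, negMulLog (f i)) / log b := by
  simp only [logb, negMulLog, sum_div, ← sum_neg_distrib]
  congr! 1 with i
  ring

section

variable {X : Type*} [Fintype X]

lemma sum_negMulLog_le_of_eq_zero {b : X → ℝ} (hb : ∀ x, 0 ≤ b x) {x₀ : X} (hx₀ : b x₀ = 0) :
    ∑ x, negMulLog (b x) ≤
      negMulLog (∑ x, b x) + (∑ x, b x) * log (Fintype.card X - 1) := by
  classical
  have hcard : (#(univ.erase x₀) : ℝ) = Fintype.card X - 1 := by
    rw [card_erase_of_mem (mem_univ x₀), card_univ, Nat.cast_pred (Fintype.card_pos_iff.2 ⟨x₀⟩)]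
  rw [← add_sum_erase _ _ (mem_univ x₀), ← add_sum_erase _ _ (mem_univ x₀), hx₀,
    negMulLog_zero, zero_add, zero_add, ← hcard]
  exact sum_negMulLog_le _ fun x _ => hb x

lemma sum_negMulLog_add_le {a b : X → ℝ} (ha : ∀ x, 0 ≤ a x) (hb : ∀ x, 0 ≤ b x) {x₀ : X}
    (hx₀ : b x₀ = 0) :
    ∑ x, negMulLog (a x + b x) ≤ ∑ x, negMulLog (a x) + negMulLog (∑ x, b x) +
      (∑ x, b x) * log (Fintype.card X - 1) := by
  calc ∑ x, negMulLog (a x + b x)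
      ≤ ∑ x, negMulLog (a x) + ∑ x, negMulLog (b x) := by
        rw [← sum_add_distrib]
        exact sum_le_sum fun x _ => negMulLog_add_le (ha x) (hb x)
    _ ≤ _ := by
        rw [add_assoc]
        exact add_le_add le_rfl (sum_negMulLog_le_of_eq_zero hb hx₀)

lemma sum_negMulLog_add_mul_log_le {a b : X → ℝ} (ha : ∀ x, 0 ≤ a x) (hb : ∀ x, 0 ≤ b x)
    (hab : ∑ x, (a x + b x) = 1) (ha_pos : 0 < ∑ x, a x) :
    ∑ x, negMulLog (a x) + (∑ x, a x) * log (∑ x, a x) ≤ ∑ x, negMulLog (a x + b x) := by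
  have hb_le : ∀ x, b x ≤ 1 - ∑ x, a x := fun x => by
    rw [← hab, sum_add_distrib, add_sub_cancel_left]
    exact single_le_sum (fun y _ => hb y) (mem_univ x)
  rw [sum_mul, ← sum_add_distrib]
  exact sum_le_sum fun x _ => negMulLog_add_mul_log_le (ha x) (hb x) ha_pos (hb_le x)

lemma sum_abs_sub_eq_two_mul_sum_sub_min {P Q : X → ℝ} (h : ∑ x, P x = ∑ x, Q x) :
    ∑ x, |P x - Q x| = 2 * ∑ x, (P x - min (P x) (Q x)) := by
  have hpt : ∀ x, |P x - Q x| = 2 * (P x - min (P x) (Q x)) + (Q x - P x) := fun x => by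
    rw [← max_sub_min_eq_abs']
    linarith [min_add_max (P x) (Q x)]
  have hQP : ∑ x, (Q x - P x) = 0 := by rw [sum_sub_distrib, h, sub_self]
  rw [sum_congr rfl fun x _ => hpt x, sum_add_distrib, ← mul_sum, hQP, add_zero]

theorem sum_negMulLog_sub_sum_negMulLog_le {P Q : X → ℝ} (hP0 : ∀ x, 0 ≤ P x)
    (hP1 : ∑ x, P x = 1) (hQ0 : ∀ x, 0 ≤ Q x) (hQ1 : ∑ x, Q x = 1) {δ : ℝ} (hδ1 : δ ≤ 1)
    (hTV : ∑ x, |P x - Q x| ≤ δ) :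
    ∑ x, negMulLog (P x) - ∑ x, negMulLog (Q x) ≤
      δ / 2 * log (Fintype.card X - 1) + binEntropy (δ / 2) := by
  set m := fun x => min (P x) (Q x)
  set s := ∑ x, (P x - m x) with hs
  have hPQ : ∑ x, P x = ∑ x, Q x := hP1.trans hQ1.symm
  have hs_TV : ∑ x, |P x - Q x| = 2 * s := sum_abs_sub_eq_two_mul_sum_sub_min hPQ
  have hs0 : 0 ≤ s := sum_nonneg fun x _ => sub_nonneg.2 (min_le_left _ _)
  have hsδ : s ≤ δ / 2 := by linarith
  have hm1 : ∑ x, m x = 1 - s := by rw [hs, sum_sub_distrib, hP1, sub_sub_cancel]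
  obtain ⟨x₀, -, hx₀⟩ := exists_le_of_sum_le
    (nonempty_of_sum_ne_zero (hP1 ▸ one_ne_zero : ∑ x, P x ≠ 0)) hPQ.le
  have hlog : 0 ≤ log (Fintype.card X - 1) := by
    rw [← Nat.cast_pred (Fintype.card_pos_iff.2 ⟨x₀⟩)]
    exact log_natCast_nonneg _
  have upper := sum_negMulLog_add_le (a := m) (b := fun x => P x - m x)
    (fun x => le_min (hP0 x) (hQ0 x)) (fun x => sub_nonneg.2 (min_le_left _ _))
    (x₀ := x₀) (by simp [m, min_eq_left hx₀])
  have lower := sum_negMulLog_add_mul_log_le (a := m) (b := fun x => Q x - m x)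
    (fun x => le_min (hP0 x) (hQ0 x)) (fun x => sub_nonneg.2 (min_le_right _ _))
    (by simp only [add_sub_cancel, hQ1]) (by linarith)
  simp only [add_sub_cancel] at upper lower
  rw [hm1] at lower
  calc ∑ x, negMulLog (P x) - ∑ x, negMulLog (Q x)
      ≤ s * log (Fintype.card X - 1) + binEntropy s := by
        have h1s : negMulLog (1 - s) = -(1 - s) * log (1 - s) := rfl
        rw [binEntropy_eq_negMulLog_add_negMulLog_one_sub, h1s]
        linarith
    _ ≤ δ / 2 * log (Fintype.card X - 1) + binEntropy (δ / 2) :=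
        add_le_add (mul_le_mul_of_nonneg_right hsδ hlog)
          (binEntropy_strictMonoOn.monotoneOn ⟨hs0, by linarith⟩ ⟨by linarith, by linarith⟩ hsδ)

end

theorem entropy_continuity_general {X : Type*} [Fintype X]
    (P Q : X → ℝ)
    (hP0 : ∀ x, 0 ≤ P x) (hP1 : ∑ x, P x = 1)
    (hQ0 : ∀ x, 0 ≤ Q x) (hQ1 : ∑ x, Q x = 1)
    (δ : ℝ) (hδ1 : δ ≤ 1)
    (hTV : ∑ x, |P x - Q x| ≤ δ) :
    |(-∑ x, P x * Real.logb 2 (P x)) - (-∑ x, Q x * Real.logb 2 (Q x))| ≤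
      δ / 2 * Real.logb 2 ((Fintype.card X : ℝ) - 1) +
        (-(δ / 2) * Real.logb 2 (δ / 2) - (1 - δ / 2) * Real.logb 2 (1 - δ / 2)) := by
  have hPQ := sum_negMulLog_sub_sum_negMulLog_le hP0 hP1 hQ0 hQ1 hδ1 hTV
  have hQP := sum_negMulLog_sub_sum_negMulLog_le hQ0 hQ1 hP0 hP1 hδ1
    (by simpa only [abs_sub_comm] using hTV)
  have hbound : δ / 2 * logb 2 ((Fintype.card X : ℝ) - 1) +
      (-(δ / 2) * logb 2 (δ / 2) - (1 - δ / 2) * logb 2 (1 - δ / 2)) =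
      (δ / 2 * log ((Fintype.card X : ℝ) - 1) + binEntropy (δ / 2)) / log 2 := by
    simp only [logb, binEntropy_eq_negMulLog_add_negMulLog_one_sub, negMulLog]
    ring
  rw [neg_sum_mul_logb, neg_sum_mul_logb, hbound, div_sub_div_same, abs_div,
    abs_of_pos (log_pos one_lt_two)]
  gcongr
  exact abs_sub_le_iff.2 ⟨hPQ, hQP⟩

/-- Continuity of entropy in total variation (Csiszár–Körner, Problem 3.10):
if `∑ x, |P x − Q x| ≤ δ` with `δ ∈ [0,1]` and `|X| ≥ 2`, then
`|H(P) − H(Q)| ≤ (δ/2) log₂(|X|−1) + h(δ/2)`. -/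
theorem entropy_continuity {X : Type*} [Fintype X] (hX : 2 ≤ Fintype.card X)
    (P Q : X → ℝ)
    (hP0 : ∀ x, 0 ≤ P x) (hP1 : ∑ x, P x = 1)
    (hQ0 : ∀ x, 0 ≤ Q x) (hQ1 : ∑ x, Q x = 1)
    (δ : ℝ) (hδ0 : 0 ≤ δ) (hδ1 : δ ≤ 1)
    (hTV : ∑ x, |P x - Q x| ≤ δ) :
    |(-∑ x, P x * Real.logb 2 (P x)) - (-∑ x, Q x * Real.logb 2 (Q x))| ≤
      δ / 2 * Real.logb 2 ((Fintype.card X : ℝ) - 1) +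
        (-(δ / 2) * Real.logb 2 (δ / 2) - (1 - δ / 2) * Real.logb 2 (1 - δ / 2)) :=
  entropy_continuity_general P Q hP0 hP1 hQ0 hQ1 δ hδ1 hTV
end
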